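/- Setting v_j = v^j/j! in the dual generating function yields the identity ∑_{x:|x|=N} multinomial(N;n^+)^{-1} multinomial(N;x) Q_n(x;ũ) v^{∑_j j x_j} / ∏_j (j!)^{x_j} = ∏_{k=1}^N (∑_{j≥0} Q_j(z_k) v^j/j!), where n_l = |{k : z_k = ζ_l}|; consequently, if the polynomials Q_j belong to the Meixner class with generating function h(v) e^{z u(v)} = ∑_j Q_j(z) v^j/j!, then multinomial(N;n)^{-1} ∑_{x: ∑_j j x_j = m} multinomial(N;x) (m!/∏_j (j!)^{x_j}) Q_n(x;ũ) = Q_m^N(|z|), where Q_m^N is defined by h(v)^N e^{|z| u(v)} = ∑_m Q_m^N(|z|) v^m/m!. -/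

import Mathlib

/-!
Write `A_j = ∑_l u_j^{(l)} w_l` with `w_0 = 1`, so that `Q_n(x;u)` is the coefficient of
`w^n = ∏_{l ≠ 0} w_l^{n_l}` in `∏_j A_j^{x_j}`. Expanding the `N`-th power of the linear form
`∑_j c_j A_j = ∑_l (∑_j u_j^{(l)} c_j) w_l` by the multinomial theorem, once in `j` and once
in `l`, and reading off the coefficient of `w^n` gives
`∑_x multinomial(N;x) c^x Q_n(x;u) = multinomial(N;n) ∏_l (∑_j u_j^{(l)} c_j)^{n_l}`,
and grouping the points `z_k` by value turns the right side into `∏_k ∑_j Q_j(z_k) c_j`.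
For `c_j = v^j/j!` both sides are polynomials in `v`. Their coefficients of `v^m`, `m < D`, are
those of `∏_k h E_{z_k} = h^N E_{|z|}`, because each factor `∑_{j<D} Q_j(z_k) v^j/j!` is the
truncation of `h E_{z_k}` below degree `D`.
-/

open MvPolynomial Nat

/-- Generalized multivariate Krawtchouk polynomial `Q_n(x;u)` for a (not necessarily
normalized) basis `u`: the coefficient of `∏_{l≠0} w_l^{n_l}` in
`∏_j (u_j^{(0)} + ∑_{l≠0} w_l u_j^{(l)})^{x_j}`. -/
noncomputable def QKgen (D : ℕ) [NeZero D] (u : Fin D → Fin D → ℝ)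
    (n x : Fin D → ℕ) : ℝ :=
  MvPolynomial.coeff
    (Finsupp.equivFunOnFinite.symm (fun l => if l = 0 then 0 else n l))
    (∏ j, (MvPolynomial.C (u 0 j) +
      ∑ l ∈ Finset.univ.erase 0, MvPolynomial.X l * MvPolynomial.C (u l j)) ^ x j)

open Finset

@[to_additive]
theorem Finset.prod_pow_card_filter_eq_prod {ι κ α M : Type*} [Fintype ι] [Fintype κ]
    [DecidableEq α] [CommMonoid M] {ζ : κ → α} (hζ : Function.Injective ζ) {z : ι → α}
    (hz : ∀ k, ∃ l, z k = ζ l) (g : α → M) :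
    ∏ l, g (ζ l) ^ #{k | z k = ζ l} = ∏ k, g (z k) := by
  rw [← prod_fiberwise_of_maps_to (t := univ.image ζ) (g := z) (by simpa [eq_comm] using hz),
    prod_image hζ.injOn]
  refine prod_congr rfl fun l _ => ?_
  rw [eq_comm, prod_congr rfl fun k hk => congrArg g (mem_filter.1 hk).2, prod_const]

theorem Finset.sum_card_filter_eq_card {ι κ α : Type*} [Fintype ι] [Fintype κ]
    [DecidableEq α] {ζ : κ → α} (hζ : Function.Injective ζ) {z : ι → α}
    (hz : ∀ k, ∃ l, z k = ζ l) :
    ∑ l, #{k | z k = ζ l} = Fintype.card ι := by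
  simpa using sum_nsmul_card_filter_eq_sum hζ hz (fun _ => (1 : ℕ))

theorem Finset.apply_sum_eq_prod_apply {ι α M : Type*} [AddCommMonoid α] [CommMonoid M]
    {E : α → M} (hzero : E 0 = 1) (hadd : ∀ a b, E (a + b) = E a * E b)
    (s : Finset ι) (z : ι → α) : E (∑ k ∈ s, z k) = ∏ k ∈ s, E (z k) := by
  classical
  induction s using Finset.induction_on with
  | empty => simpa using hzero
  | insert a s ha ih => rw [sum_insert ha, prod_insert ha, hadd, ih]

theorem Finset.prod_pow_div_pow_eq_pow_sum_div {ι M : Type*} [Fintype ι]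
    [DivisionCommMonoid M] (v : M) (w : ι → ℕ) (d : ι → M) (x : ι → ℕ) :
    ∏ i, (v ^ w i / d i) ^ x i = v ^ (∑ i, w i * x i) / ∏ i, d i ^ x i := by
  simp only [div_pow, prod_div_distrib, ← pow_mul, prod_pow_eq_pow_sum]

theorem Polynomial.sum_filter_eq_coeff_of_eval {R ι : Type*} [CommRing R] [IsDomain R]
    [Infinite R] (s : Finset ι) (a : ι → R) (w : ι → ℕ) (q : Polynomial R)
    (h : ∀ v, ∑ x ∈ s, a x * v ^ w x = q.eval v) (m : ℕ) :
    ∑ x ∈ s with w x = m, a x = q.coeff m := by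
  have hq : ∑ x ∈ s, C (a x) * X ^ w x = q :=
    funext fun v => by simp [eval_finsetSum, h]
  rw [← hq, finsetSum_coeff, sum_filter]
  simp only [coeff_C_mul_X_pow, eq_comm]

namespace PowerSeries

variable {R ι : Type*} [CommSemiring R]

theorem eval_trunc (n : ℕ) (f : PowerSeries R) (v : R) :
    (trunc n f).eval v = ∑ i ∈ range n, coeff i f * v ^ i :=
  eval₂_trunc_eq_sum_range v (RingHom.id R) n f

theorem trunc_prod_trunc (n : ℕ) (s : Finset ι) (f : ι → PowerSeries R) :
    trunc n (∏ k ∈ s, (trunc n (f k) : PowerSeries R)) = trunc n (∏ k ∈ s, f k) := by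
  classical
  induction s using Finset.induction_on with
  | empty => rfl
  | insert a s ha ih =>
    rw [prod_insert ha, prod_insert ha, trunc_trunc_mul, ← trunc_mul_trunc, ih, trunc_mul_trunc]

theorem coeff_prod_trunc {m n : ℕ} (hm : m < n) (s : Finset ι) (f : ι → PowerSeries R) :
    (∏ k ∈ s, trunc n (f k)).coeff m = coeff m (∏ k ∈ s, f k) := by
  have hcoe : ((∏ k ∈ s, trunc n (f k) : Polynomial R) : PowerSeries R) =
      ∏ k ∈ s, (trunc n (f k) : PowerSeries R) :=
    map_prod Polynomial.coeToPowerSeries.ringHom _ _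
  rw [← Polynomial.coeff_coe, hcoe, ← coeff_coe_trunc_of_lt hm, trunc_prod_trunc,
    coeff_coe_trunc_of_lt hm]

end PowerSeries

noncomputable section

namespace Krawtchouk

variable {D : ℕ} [NeZero D]

/-- The exponent of `∏_{l ≠ 0} w_l ^ m l`, the monomial whose coefficient `QKgen` extracts. -/
def tailExponent (m : Fin D → ℕ) : Fin D →₀ ℕ :=
  Finsupp.equivFunOnFinite.symm fun l => if l = 0 then 0 else m l

/-- The variables `w_l` of `QKgen`, with `w_0 = 1`. -/
def dehomX (R : Type*) [CommSemiring R] (l : Fin D) : MvPolynomial (Fin D) R :=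
  if l = 0 then 1 else X l

variable {R : Type*} [CommSemiring R]

theorem prod_dehomX_pow (m : Fin D → ℕ) :
    ∏ l, dehomX R l ^ m l = monomial (tailExponent m) 1 := by
  have hX : ∀ l ∈ univ.erase 0, dehomX R l ^ m l = X l ^ m l := fun l hl => by
    rw [dehomX, if_neg (ne_of_mem_erase hl)]
  have hexp : Finsupp.indicator (univ.erase 0) (fun l _ => m l) = tailExponent m := by
    ext l
    by_cases hl : l = 0 <;> simp [tailExponent, hl]
  rw [← prod_erase univ (f := fun l => dehomX R l ^ m l) (a := 0) (by simp [dehomX]),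
    prod_congr rfl hX, prod_X_pow, hexp]

theorem eq_of_tailExponent_eq {m n : Fin D → ℕ} (hsum : ∑ l, m l = ∑ l, n l)
    (h : tailExponent m = tailExponent n) : m = n := by
  have htail : ∀ l ≠ 0, m l = n l := fun l hl => by
    simpa [tailExponent, hl] using DFunLike.congr_fun h l
  have hzero : m 0 = n 0 := by
    rw [← add_sum_erase _ _ (mem_univ 0), ← add_sum_erase _ _ (mem_univ 0),
      sum_congr rfl fun l hl => htail l (ne_of_mem_erase hl)] at hsum
    exact Nat.add_right_cancel hsum
  funext l
  by_cases hl : l = 0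
  · rw [hl, hzero]
  · exact htail l hl

theorem coeff_tailExponent_sum_pow {N : ℕ} (S : Fin D → R) {n : Fin D → ℕ}
    (hn : ∑ l, n l = N) :
    coeff (tailExponent n) ((∑ l, C (S l) * dehomX R l) ^ N) =
      multinomial univ n * ∏ l, S l ^ n l := by
  have hterm : ∀ m : Fin D → ℕ, (multinomial univ m : MvPolynomial (Fin D) R) *
      ∏ l, (C (S l) * dehomX R l) ^ m l =
        C (multinomial univ m * ∏ l, S l ^ m l) * monomial (tailExponent m) 1 := fun m => by
    simp only [mul_pow, prod_mul_distrib, prod_dehomX_pow, map_mul, map_natCast, map_prod,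
      map_pow, mul_assoc]
  rw [sum_pow_eq_sum_piAntidiag, coeff_sum, sum_eq_single_of_mem n (by simp [hn])]
  · rw [hterm, coeff_C_mul, coeff_monomial, if_pos rfl, mul_one]
  · intro m hm hmn
    rw [hterm, coeff_C_mul, coeff_monomial, if_neg, mul_zero]
    exact fun h => hmn (eq_of_tailExponent_eq (by rw [(mem_piAntidiag.1 hm).1, hn]) h)

theorem factor_eq_sum_C_mul_dehomX (u : Fin D → Fin D → R) (j : Fin D) :
    C (u 0 j) + ∑ l ∈ univ.erase 0, X l * C (u l j) = ∑ l, C (u l j) * dehomX R l := by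
  rw [← add_sum_erase _ _ (mem_univ 0)]
  congr 1
  · simp [dehomX]
  · exact sum_congr rfl fun l hl => by rw [dehomX, if_neg (ne_of_mem_erase hl), mul_comm]

theorem sum_multinomial_mul_QKgen {N : ℕ} (u : Fin D → Fin D → ℝ) (c : Fin D → ℝ)
    {n : Fin D → ℕ} (hn : ∑ l, n l = N) :
    ∑ x ∈ Nat.antidiagonalTuple D N, multinomial univ x * (∏ j, c j ^ x j) * QKgen D u n x =
      multinomial univ n * ∏ l, (∑ j, u l j * c j) ^ n l := by
  set A : Fin D → MvPolynomial (Fin D) ℝ := fun j => ∑ l, C (u l j) * dehomX ℝ l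
  have hQK : ∀ x, QKgen D u n x = coeff (tailExponent n) (∏ j, A j ^ x j) := fun x => by
    simp only [QKgen, A, tailExponent, factor_eq_sum_C_mul_dehomX]
  have hswap : ∑ j, C (c j) * A j = ∑ l, C (∑ j, u l j * c j) * dehomX ℝ l := by
    simp only [A, mul_sum, map_sum, sum_mul, map_mul]
    rw [sum_comm]
    exact sum_congr rfl fun l _ => sum_congr rfl fun j _ => by ring
  calc ∑ x ∈ Nat.antidiagonalTuple D N, multinomial univ x * (∏ j, c j ^ x j) * QKgen D u n x
      = coeff (tailExponent n) ((∑ j, C (c j) * A j) ^ N) := by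
        rw [sum_pow_eq_sum_piAntidiag, piAntidiag_univ_fin_eq_antidiagonalTuple, coeff_sum]
        refine sum_congr rfl fun x _ => ?_
        rw [hQK, ← coeff_C_mul]
        simp only [mul_pow, prod_mul_distrib, map_mul, map_natCast, map_prod, map_pow, mul_assoc]
    _ = multinomial univ n * ∏ l, (∑ j, u l j * c j) ^ n l := by
        rw [hswap, coeff_tailExponent_sum_pow _ hn]

variable {N : ℕ} {ζ : Fin D → ℝ} {z : Fin N → ℝ} {n : Fin D → ℕ}

theorem sum_multinomial_mul_QKgen_eq_prod (hζ : Function.Injective ζ)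
    (hz : ∀ k, ∃ l, z k = ζ l) (hn : ∀ l, n l = #{k | z k = ζ l}) (Qp : ℕ → ℝ → ℝ)
    (c : Fin D → ℝ) :
    ∑ x ∈ Nat.antidiagonalTuple D N,
        multinomial univ x * (∏ j, c j ^ x j) * QKgen D (fun l j => Qp j (ζ l)) n x =
      multinomial univ n * ∏ k, ∑ j : Fin D, Qp j (z k) * c j := by
  have hN : ∑ l, n l = N := by
    simpa only [hn, Fintype.card_fin] using sum_card_filter_eq_card hζ hz
  simp only [sum_multinomial_mul_QKgen _ c hN, hn,
    prod_pow_card_filter_eq_prod hζ hz fun w => ∑ j : Fin D, Qp j w * c j]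

theorem sum_QKgen_mul_pow_div_factorial (hζ : Function.Injective ζ)
    (hz : ∀ k, ∃ l, z k = ζ l) (hn : ∀ l, n l = #{k | z k = ζ l}) (Qp : ℕ → ℝ → ℝ)
    (v : ℝ) :
    ∑ x ∈ Nat.antidiagonalTuple D N,
        (multinomial univ n : ℝ)⁻¹ * multinomial univ x *
          QKgen D (fun l j => Qp j (ζ l)) n x *
          (v ^ (∑ j : Fin D, (j : ℕ) * x j) / ∏ j : Fin D, ((j : ℕ)! : ℝ) ^ x j) =
      ∏ k, ∑ j : Fin D, Qp j (z k) * v ^ (j : ℕ) / ((j : ℕ)! : ℝ) := by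
  have hmult : (multinomial univ n : ℝ) ≠ 0 := by exact_mod_cast (multinomial_pos _ _).ne'
  have key := sum_multinomial_mul_QKgen_eq_prod hζ hz hn Qp fun j => v ^ (j : ℕ) / (j ! : ℝ)
  simp only [prod_pow_div_pow_eq_pow_sum_div, ← mul_div_assoc] at key
  rw [← inv_mul_cancel_left₀ hmult (∏ k, _), ← key, mul_sum]
  exact sum_congr rfl fun x _ => by ring

end Krawtchouk

end

open scoped Classical in
theorem dual_krawtchouk_meixner_identity_general
    (D N : ℕ) [NeZero D]
    (ζ : Fin D → ℝ) (hζ : Function.Injective ζ)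
    (Qp : ℕ → ℝ → ℝ)
    (z : Fin N → ℝ) (hz : ∀ k, ∃ l : Fin D, z k = ζ l)
    (n : Fin D → ℕ)
    (hn : ∀ l, n l = (Finset.univ.filter (fun k => z k = ζ l)).card)
    (h : PowerSeries ℝ)
    (E : ℝ → PowerSeries ℝ) (hE0 : E 0 = 1)
    (hEadd : ∀ a b, E (a + b) = E a * E b)
    (hMeixner : ∀ zz j, PowerSeries.coeff j (h * E zz) = Qp j zz / (j ! : ℝ)) :
    (∀ v : ℝ,
      ∑ x ∈ Finset.Nat.antidiagonalTuple D N,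
          ((Nat.multinomial Finset.univ n : ℝ))⁻¹ *
            (Nat.multinomial Finset.univ x : ℝ) *
            QKgen D (fun (l j : Fin D) => Qp (j : ℕ) (ζ l)) n x *
            (v ^ (∑ j : Fin D, (j : ℕ) * x j) / ∏ j : Fin D, (((j : ℕ)! : ℝ)) ^ x j) =
        ∏ k, ∑ j : Fin D, Qp (j : ℕ) (z k) * v ^ (j : ℕ) / ((j : ℕ)! : ℝ)) ∧
    (∀ m : ℕ, m < D →
      ((Nat.multinomial Finset.univ n : ℝ))⁻¹ *
          ∑ x ∈ (Finset.Nat.antidiagonalTuple D N).filter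
              (fun x => ∑ j : Fin D, (j : ℕ) * x j = m),
            (Nat.multinomial Finset.univ x : ℝ) *
              ((m ! : ℝ) / ∏ j : Fin D, (((j : ℕ)! : ℝ)) ^ x j) *
              QKgen D (fun (l j : Fin D) => Qp (j : ℕ) (ζ l)) n x =
        (m ! : ℝ) * PowerSeries.coeff m (h ^ N * E (∑ k, z k))) := by
  have hdual := Krawtchouk.sum_QKgen_mul_pow_div_factorial hζ hz hn Qp
  refine ⟨hdual, fun m hm => ?_⟩
  have htrunc : ∀ w v : ℝ, ∑ j : Fin D, Qp j w * v ^ (j : ℕ) / ((j : ℕ)! : ℝ) =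
      (PowerSeries.trunc D (h * E w)).eval v := fun w v => by
    rw [PowerSeries.eval_trunc, ← Fin.sum_univ_eq_sum_range]
    exact sum_congr rfl fun j _ => by rw [hMeixner]; ring
  have hcoeff := Polynomial.sum_filter_eq_coeff_of_eval _
    (fun x => (multinomial univ n : ℝ)⁻¹ * multinomial univ x *
      QKgen D (fun l j => Qp j (ζ l)) n x / ∏ j : Fin D, ((j : ℕ)! : ℝ) ^ x j)
    (fun x => ∑ j : Fin D, (j : ℕ) * x j) (∏ k, PowerSeries.trunc D (h * E (z k)))
    (fun v => by
      simp only [Polynomial.eval_prod, ← htrunc, ← hdual v]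
      exact sum_congr rfl fun x _ => by ring) m
  have hprod : ∏ k, h * E (z k) = h ^ N * E (∑ k, z k) := by
    rw [prod_mul_distrib, prod_const, Finset.card_fin, apply_sum_eq_prod_apply hE0 hEadd]
  rw [PowerSeries.coeff_prod_trunc hm, hprod] at hcoeff
  rw [← hcoeff, mul_sum, mul_sum]
  exact sum_congr rfl fun x _ => by ring

open scoped Classical in
/-- Theorem 11: setting `v_j = v^j/j!` in the dual generating function gives
`∑_{x:|x|=N} multinomial(N;n)⁻¹ multinomial(N;x) Q_n(x;ũ) v^{∑ j x_j}/∏ (j!)^{x_j}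
  = ∏_{k=1}^N ∑_j Q_j(z_k) v^j/j!`, and consequently, for polynomials of Meixner type
(`∑_j Q_j(z) v^j/j! = h(v) E_z(v)` with `E` multiplicative in `z`), the spectral
polynomials aggregate to `Q_m^N(|z|)` defined by `h^N E_{|z|}`. -/
theorem dual_krawtchouk_meixner_identity
    (D N : ℕ) [NeZero D] (hD : 2 ≤ D)
    (ζ : Fin D → ℝ) (hζ : Function.Injective ζ)
    (Qp : ℕ → ℝ → ℝ) (hQ0 : ∀ zz, Qp 0 zz = 1)
    (z : Fin N → ℝ) (hz : ∀ k, ∃ l : Fin D, z k = ζ l)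
    (n : Fin D → ℕ)
    (hn : ∀ l, n l = (Finset.univ.filter (fun k => z k = ζ l)).card)
    (h : PowerSeries ℝ) (hh : PowerSeries.constantCoeff h = 1)
    (E : ℝ → PowerSeries ℝ) (hE0 : E 0 = 1)
    (hEadd : ∀ a b, E (a + b) = E a * E b)
    (hMeixner : ∀ zz j, PowerSeries.coeff j (h * E zz) = Qp j zz / (j ! : ℝ)) :
    (∀ v : ℝ,
      ∑ x ∈ Finset.Nat.antidiagonalTuple D N,
          ((Nat.multinomial Finset.univ n : ℝ))⁻¹ *
            (Nat.multinomial Finset.univ x : ℝ) *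
            QKgen D (fun (l j : Fin D) => Qp (j : ℕ) (ζ l)) n x *
            (v ^ (∑ j : Fin D, (j : ℕ) * x j) / ∏ j : Fin D, (((j : ℕ)! : ℝ)) ^ x j) =
        ∏ k, ∑ j : Fin D, Qp (j : ℕ) (z k) * v ^ (j : ℕ) / ((j : ℕ)! : ℝ)) ∧
    (∀ m : ℕ, m < D →
      ((Nat.multinomial Finset.univ n : ℝ))⁻¹ *
          ∑ x ∈ (Finset.Nat.antidiagonalTuple D N).filter
              (fun x => ∑ j : Fin D, (j : ℕ) * x j = m),
            (Nat.multinomial Finset.univ x : ℝ) *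
              ((m ! : ℝ) / ∏ j : Fin D, (((j : ℕ)! : ℝ)) ^ x j) *
              QKgen D (fun (l j : Fin D) => Qp (j : ℕ) (ζ l)) n x =
        (m ! : ℝ) * PowerSeries.coeff m (h ^ N * E (∑ k, z k))) :=
  dual_krawtchouk_meixner_identity_general D N ζ hζ Qp z hz n hn h E hE0 hEadd hMeixner
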